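/- Let Z, Z' be i.i.d. and g a real-valued measurable function of (f, Z) with 0 ≤ g(f, Z) bounded; suppose Var(g(f, Z)) ≤ 16βₙ² E[g(f, Z)] for some βₙ ≥ 1, and |g(f, Z)| ≤ 8βₙ² almost surely, where E[g(f, Z)] ≥ 0. Let G(f, Zᵢ) have mean E_{Z'}[g(f, Z')] − 2 g(f, Zᵢ). Then for i.i.d. Z₁, …, Zₙ and every t > 0, P{ (1/n) Σᵢ G(f, Zᵢ) > t } ≤ exp( − (1/(128 + 32/3)) · n t / βₙ² ). -/

import Mathlib

/-!
Chernoff's method at the single exponent `λ = 1/(96 βₙ²)`. For `y ≥ 0` one has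
`e^{-y} ≤ 1 - y + y²`, so with `m = E g` the summand `X = m - 2g` satisfies
`E e^{λX} ≤ e^{λm} (1 - 2λm + 4λ² E g²)`. The variance condition together with `m ≤ 8βₙ²`
gives `E g² ≤ 24 βₙ² m`, i.e. `4λ E g² ≤ m`, whence `E e^{λX} ≤ e^{λm} (1 - λm) ≤ 1`.
By independence the sum of `n` copies has moment generating function at most `1` at `λ`,
and Markov's inequality yields the tail `e^{-λnt}`, which is stronger than claimed since
`1/96 > 1/(128 + 32/3)`.
-/

open MeasureTheory Real ProbabilityTheory

lemma Real.exp_neg_le_one_sub_add_sq {y : ℝ} (hy : 0 ≤ y) : exp (-y) ≤ 1 - y + y ^ 2 := by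
  have hq : 0 ≤ 1 - y + y ^ 2 := by nlinarith [sq_nonneg (2 * y - 1)]
  have h : exp (-y) * exp y = 1 := by rw [← exp_add, neg_add_cancel, exp_zero]
  nlinarith [mul_le_mul_of_nonneg_left (add_one_le_exp y) hq, exp_pos y]

namespace ProbabilityTheory

variable {Ω : Type*} [MeasurableSpace Ω] {μ : Measure Ω} [IsProbabilityMeasure μ]

lemma mgf_neg_le_of_nonneg {X : Ω → ℝ} (hX0 : ∀ ω, 0 ≤ X ω) (hX : MemLp X 2 μ)
    {s : ℝ} (hs : 0 ≤ s) :
    mgf X μ (-s) ≤ 1 - s * ∫ ω, X ω ∂μ + s ^ 2 * ∫ ω, X ω ^ 2 ∂μ := by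
  have hX1 : Integrable X μ := hX.integrable one_le_two
  have hexp : Integrable (fun ω ↦ exp (-s * X ω)) μ :=
    .of_mem_Icc 0 1 (aemeasurable_exp_mul (-s) hX.aestronglyMeasurable.aemeasurable).aemeasurable
      (ae_of_all _ fun ω ↦ ⟨(exp_pos _).le,
        exp_le_one_iff.mpr (by nlinarith [hX0 ω])⟩)
  have hlin : Integrable (fun ω ↦ 1 - s * X ω) μ := (integrable_const 1).sub (hX1.const_mul s)
  have hsq : Integrable (fun ω ↦ s ^ 2 * X ω ^ 2) μ := hX.integrable_sq.const_mul _
  calc mgf X μ (-s) ≤ ∫ ω, (1 - s * X ω + s ^ 2 * X ω ^ 2) ∂μ :=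
        integral_mono hexp (hlin.add hsq) fun ω ↦ by
          simpa [neg_mul, mul_pow] using exp_neg_le_one_sub_add_sq (mul_nonneg hs (hX0 ω))
    _ = 1 - s * ∫ ω, X ω ∂μ + s ^ 2 * ∫ ω, X ω ^ 2 ∂μ := by
        rw [integral_add hlin hsq, integral_sub (integrable_const 1) (hX1.const_mul s),
          integral_const_mul, integral_const_mul]
        simp

lemma mgf_integral_sub_two_mul_le_one {X : Ω → ℝ} (hX0 : ∀ ω, 0 ≤ X ω) (hX : MemLp X 2 μ)
    {t : ℝ} (ht : 0 ≤ t) (hsecond : 4 * t * ∫ ω, X ω ^ 2 ∂μ ≤ ∫ ω, X ω ∂μ) :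
    mgf (fun ω ↦ (∫ x, X x ∂μ) - 2 * X ω) μ t ≤ 1 := by
  set m := ∫ ω, X ω ∂μ
  have hneg := mgf_neg_le_of_nonneg hX0 hX (mul_nonneg zero_le_two ht)
  calc mgf (fun ω ↦ m - 2 * X ω) μ t = exp (t * m) * mgf X μ (-(2 * t)) := by
        simp_rw [sub_eq_add_neg, ← neg_mul, mgf_const_add, mgf_const_mul]
    _ ≤ exp (t * m) * exp (-(t * m)) := by
        refine mul_le_mul_of_nonneg_left (hneg.trans ?_) (exp_pos _).le
        linarith [add_one_le_exp (-(t * m)), mul_le_mul_of_nonneg_left hsecond ht]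
    _ = 1 := by rw [← exp_add, add_neg_cancel, exp_zero]

lemma iIndepFun.measure_sum_ge_le_exp_of_mgf_le_one {ι : Type*} {X : ι → Ω → ℝ}
    (h_indep : iIndepFun X μ) (h_meas : ∀ i, Measurable (X i)) {s : Finset ι} {t : ℝ}
    (ht : 0 ≤ t) (h_int : ∀ i ∈ s, Integrable (fun ω ↦ exp (t * X i ω)) μ)
    (h_mgf : ∀ i ∈ s, mgf (X i) μ t ≤ 1) (ε : ℝ) :
    μ.real {ω | ε ≤ ∑ i ∈ s, X i ω} ≤ exp (-t * ε) := by
  have h := measure_ge_le_exp_mul_mgf ε ht (h_indep.integrable_exp_mul_sum h_meas h_int)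
  rw [h_indep.mgf_sum h_meas] at h
  simp only [Finset.sum_apply] at h
  exact h.trans (mul_le_of_le_one_right (exp_pos _).le
    (Finset.prod_le_one (fun _ _ ↦ mgf_nonneg) h_mgf))

end ProbabilityTheory

theorem bernstein_tail_bound_general {Ω E : Type*} [MeasurableSpace Ω] [MeasurableSpace E]
    (P : Measure Ω) [IsProbabilityMeasure P] (μ : Measure E) [IsProbabilityMeasure μ]
    (n : ℕ) (hn : 0 < n) (Z : Fin n → Ω → E)
    (hmeas : ∀ i, Measurable (Z i))
    (hindep : iIndepFun Z P)
    (hlaw : ∀ i, P.map (Z i) = μ)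
    (g : E → ℝ) (hg : Measurable g) (βn : ℝ)
    (hg0 : ∀ e, 0 ≤ g e) (hgbd : ∀ e, g e ≤ 8 * βn ^ 2)
    (hvar : (∫ e, (g e) ^ 2 ∂μ) - (∫ e, g e ∂μ) ^ 2 ≤ 16 * βn ^ 2 * ∫ e, g e ∂μ) :
    ∀ t : ℝ, 0 < t →
      P {ω | t < (1 / n) * ∑ i, ((∫ e, g e ∂μ) - 2 * g (Z i ω))} ≤
        ENNReal.ofReal (exp (-(1 / (128 + 32 / 3)) * (n * t) / βn ^ 2)) := by
  intro t ht
  set m := ∫ e, g e ∂μ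
  set lam := 1 / (96 * βn ^ 2)
  have hlam : 0 ≤ lam := by positivity
  have hg2 : MemLp g 2 μ := .of_bound hg.aestronglyMeasurable (8 * βn ^ 2)
    (ae_of_all _ fun e ↦ by rw [norm_of_nonneg (hg0 e)]; exact hgbd e)
  have hm0 : 0 ≤ m := integral_nonneg hg0
  have hm_le : m ≤ 8 * βn ^ 2 := by
    simpa using integral_mono (hg2.integrable one_le_two) (integrable_const _) hgbd
  have hsecond : 4 * lam * ∫ e, g e ^ 2 ∂μ ≤ m := by
    rw [show 4 * lam * ∫ e, g e ^ 2 ∂μ = (∫ e, g e ^ 2 ∂μ) / (24 * βn ^ 2) by ring]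
    exact div_le_of_le_mul₀ (by positivity) hm0 (by nlinarith)
  have hmgf := mgf_integral_sub_two_mul_le_one hg0 hg2 hlam hsecond
  have hφ : Measurable fun e ↦ m - 2 * g e := measurable_const.sub (hg.const_mul 2)
  have htail : P.real {ω | n * t ≤ ∑ i, (m - 2 * g (Z i ω))} ≤ exp (-lam * (n * t)) :=
    (hindep.comp _ fun _ ↦ hφ).measure_sum_ge_le_exp_of_mgf_le_one (s := .univ)
    (fun i ↦ hφ.comp (hmeas i)) hlam
    (fun i _ ↦ integrable_exp_mul_of_le lam m hlam (hφ.comp (hmeas i)).aemeasurable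
      (ae_of_all _ fun ω ↦ by simp only [Function.comp_apply]; linarith [hg0 (Z i ω)]))
    (fun i _ ↦ by
      rwa [← mgf_map (hmeas i).aemeasurable (aemeasurable_exp_mul lam hφ.aemeasurable), hlaw i])
    (n * t)
  have hevent : {ω | t < (1 / n) * ∑ i, (m - 2 * g (Z i ω))} ⊆
      {ω | n * t ≤ ∑ i, (m - 2 * g (Z i ω))} := fun ω hω ↦ by
    rw [Set.mem_ofPred_eq, one_div_mul_eq_div, lt_div_iff₀' (by exact_mod_cast hn)] at hω
    exact hω.le
  have hexponent : -lam * (n * t) ≤ -(1 / (128 + 32 / 3)) * (n * t) / βn ^ 2 := by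
    have : 0 ≤ n * t / βn ^ 2 := by positivity
    calc -lam * (n * t) = -(1 / 96) * (n * t / βn ^ 2) := by ring
      _ ≤ -(1 / (128 + 32 / 3)) * (n * t / βn ^ 2) := by nlinarith
      _ = _ := by ring
  calc P {ω | t < (1 / n) * ∑ i, (m - 2 * g (Z i ω))}
      ≤ P {ω | n * t ≤ ∑ i, (m - 2 * g (Z i ω))} := measure_mono hevent
    _ = ENNReal.ofReal (P.real {ω | n * t ≤ ∑ i, (m - 2 * g (Z i ω))}) :=
        (ENNReal.ofReal_toReal (measure_ne_top _ _)).symm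
    _ ≤ ENNReal.ofReal (exp (-(1 / (128 + 32 / 3)) * (n * t) / βn ^ 2)) :=
        ENNReal.ofReal_le_ofReal (htail.trans (exp_le_exp.mpr hexponent))

/-- Bernstein-type tail bound for the centered sums `G(f, Zᵢ) = E[g(Z')] − 2 g(Zᵢ)`:
if `Z₁, …, Zₙ` are i.i.d. with law `μ`, `g` takes values in `[0, 8βₙ²]` and
`Var(g(Z)) ≤ 16 βₙ² E[g(Z)]`, then for every `t > 0`,
`P{(1/n) Σᵢ (E[g(Z')] − 2g(Zᵢ)) > t} ≤ exp(−(1/(128 + 32/3)) n t / βₙ²)`. -/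
theorem bernstein_tail_bound {Ω E : Type*} [MeasurableSpace Ω] [MeasurableSpace E]
    (P : Measure Ω) [IsProbabilityMeasure P] (μ : Measure E) [IsProbabilityMeasure μ]
    (n : ℕ) (hn : 0 < n) (Z : Fin n → Ω → E)
    (hmeas : ∀ i, Measurable (Z i))
    (hindep : iIndepFun Z P)
    (hlaw : ∀ i, P.map (Z i) = μ)
    (g : E → ℝ) (hg : Measurable g) (βn : ℝ) (hβn : 1 ≤ βn)
    (hg0 : ∀ e, 0 ≤ g e) (hgbd : ∀ e, g e ≤ 8 * βn ^ 2)
    (hvar : (∫ e, (g e) ^ 2 ∂μ) - (∫ e, g e ∂μ) ^ 2 ≤ 16 * βn ^ 2 * ∫ e, g e ∂μ) :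
    ∀ t : ℝ, 0 < t →
      P {ω | t < (1 / n) * ∑ i, ((∫ e, g e ∂μ) - 2 * g (Z i ω))} ≤
        ENNReal.ofReal (exp (-(1 / (128 + 32 / 3)) * (n * t) / βn ^ 2)) :=
  bernstein_tail_bound_general P μ n hn Z hmeas hindep hlaw g hg βn hg0 hgbd hvar
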